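/- Let E ⊆ ℝⁿ (n ≥ 1) be a bounded convex set with nonempty interior and s ∈ (0,1). Then the fractional s-perimeter Per_s(E) = s(1−s) ∫_E ∫_{Eᶜ} |x−y|^{−(n+s)} dy dx satisfies Per_s(E) ≥ c (w̲(E))^{−s} |E| for a constant c > 0 depending only on n and s, where w̲(E) is the minimal width of E and |E| its Lebesgue measure. Equivalently, w̲(E) ≥ c' (|E| / Per_s(E))^{1/s}. -/

import Mathlib

/-!
If `E` has width `w` in a unit direction `ω`, then for every `x ∈ E` the ball of radius `w`
around `x + 2wω` misses `E` and stays within distance `3w` of `x`. Hence the inner integral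
over `Eᶜ` is at least `(3w)^{-(n+s)} wⁿ |B₁| = 3^{-(n+s)} |B₁| w^{-s}`, and integrating over `E`
gives the bound with `w` any directional width. The bound depends continuously on `w`, so it
passes to the infimum of the widths, which is positive because `E` contains a ball.
-/

open Metric Set MeasureTheory Module
open scoped RealInnerProductSpace

theorem apply_csInf_le_of_forall_le {α : Type*} [TopologicalSpace α] [Preorder α]
    [ClosedIicTopology α] {S : Set ℝ} {f : ℝ → α} {b : α} (hne : S.Nonempty)
    (hbdd : BddBelow S) (hf : ContinuousWithinAt f S (sInf S)) (h : ∀ w ∈ S, f w ≤ b) :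
    f (sInf S) ≤ b := by
  have hmem : f (sInf S) ∈ closure (f '' S) := hf.mem_closure_image (csInf_mem_closure hne hbdd)
  exact isClosed_Iic.closure_subset_iff.mpr (image_subset_iff.mpr h) hmem

theorem ofReal_rpow_neg_mul_measure_ball_le_setLIntegral {X : Type*} [PseudoMetricSpace X]
    [MeasurableSpace X] [OpensMeasurableSpace X] (μ : Measure X) {A : Set X} {x c : X}
    {ρ p : ℝ} (hA : ball c ρ ⊆ A) (hρ : ρ ≤ dist x c) (hp : 0 ≤ p) :
    ENNReal.ofReal ((dist x c + ρ) ^ (-p)) * μ (ball c ρ) ≤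
      ∫⁻ y in A, ENNReal.ofReal (dist x y ^ (-p)) ∂μ := by
  calc ENNReal.ofReal ((dist x c + ρ) ^ (-p)) * μ (ball c ρ)
      = ∫⁻ _ in ball c ρ, ENNReal.ofReal ((dist x c + ρ) ^ (-p)) ∂μ :=
        (setLIntegral_const _ _).symm
    _ ≤ ∫⁻ y in ball c ρ, ENNReal.ofReal (dist x y ^ (-p)) ∂μ := by
        refine setLIntegral_mono' measurableSet_ball fun y hy => ?_
        rw [mem_ball] at hy
        have hpos : 0 < dist x y := by linarith [dist_triangle x y c]
        have hle : dist x y ≤ dist x c + ρ := by linarith [dist_triangle x c y, dist_comm c y]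
        exact ENNReal.ofReal_le_ofReal (Real.rpow_le_rpow_of_nonpos hpos hle (neg_nonpos.mpr hp))
    _ ≤ ∫⁻ y in A, ENNReal.ofReal (dist x y ^ (-p)) ∂μ := lintegral_mono_set hA

section InnerProductSpace

variable {F : Type*} [NormedAddCommGroup F] [InnerProductSpace ℝ F]

noncomputable def directionalWidth (E : Set F) (ω : F) : ℝ :=
  sSup {a : ℝ | ∃ x ∈ E, ∃ y ∈ E, a = ⟪x - y, ω⟫}

theorem bddAbove_inner_sub {E : Set F} (hE : Bornology.IsBounded E) (ω : F) :
    BddAbove {a : ℝ | ∃ x ∈ E, ∃ y ∈ E, a = ⟪x - y, ω⟫} := by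
  obtain ⟨C, hC⟩ := hE.exists_norm_le
  refine ⟨2 * C * ‖ω‖, ?_⟩
  rintro a ⟨x, hx, y, hy, rfl⟩
  calc ⟪x - y, ω⟫ ≤ ‖x - y‖ * ‖ω‖ := real_inner_le_norm _ _
    _ ≤ 2 * C * ‖ω‖ := by
        gcongr
        linarith [norm_sub_le x y, hC x hx, hC y hy]

theorem inner_sub_le_directionalWidth {E : Set F} (hE : Bornology.IsBounded E) {x y : F}
    (hx : x ∈ E) (hy : y ∈ E) (ω : F) : ⟪x - y, ω⟫ ≤ directionalWidth E ω :=
  le_csSup (bddAbove_inner_sub hE ω) ⟨x, hx, y, hy, rfl⟩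

theorem le_directionalWidth_of_ball_subset {E : Set F} (hE : Bornology.IsBounded E) {z : F}
    {r : ℝ} (hr : 0 < r) (hball : ball z r ⊆ E) {ω : F} (hω : ‖ω‖ = 1) :
    r ≤ directionalWidth E ω := by
  have hmem : ∀ t : ℝ, |t| < r → z + t • ω ∈ E := fun t ht =>
    hball (by simpa [dist_eq_norm, norm_smul, hω] using ht)
  have hx := hmem (r / 2) (by rw [abs_of_pos (by linarith)]; linarith)
  have hy := hmem (-(r / 2)) (by rw [abs_neg, abs_of_pos (by linarith)]; linarith)
  have hdiff : z + (r / 2) • ω - (z + (-(r / 2)) • ω) = r • ω := by module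
  have hinner := inner_sub_le_directionalWidth hE hx hy ω
  rwa [hdiff, real_inner_smul_left, real_inner_self_eq_norm_mul_norm, hω, mul_one, mul_one]
    at hinner

theorem ball_add_two_mul_smul_subset_compl {E : Set F} {x ω : F} {w : ℝ} (hω : ‖ω‖ = 1)
    (hwidth : ∀ u ∈ E, ⟪u - x, ω⟫ ≤ w) : ball (x + (2 * w) • ω) w ⊆ Eᶜ := by
  intro u hu huE
  have hnear : -w < ⟪u - (x + (2 * w) • ω), ω⟫ := by
    have h := neg_abs_le ⟪u - (x + (2 * w) • ω), ω⟫
    have h' := abs_real_inner_le_norm (u - (x + (2 * w) • ω)) ω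
    rw [mem_ball, dist_eq_norm] at hu
    rw [hω, mul_one] at h'
    linarith
  have hsplit : ⟪u - x, ω⟫ = ⟪u - (x + (2 * w) • ω), ω⟫ + 2 * w := by
    rw [show u - x = u - (x + (2 * w) • ω) + (2 * w) • ω by abel, inner_add_left,
      real_inner_smul_left, real_inner_self_eq_norm_mul_norm, hω]
    ring
  linarith [hwidth u huE]

end InnerProductSpace

section AddHaar

variable {F : Type*} [NormedAddCommGroup F] [InnerProductSpace ℝ F] [FiniteDimensional ℝ F]
  [MeasurableSpace F] [BorelSpace F] (μ : Measure F) [μ.IsAddHaarMeasure]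

theorem ofReal_mul_measure_le_lintegral_compl_of_width_le {E : Set F} (hE : MeasurableSet E)
    {ω : F} (hω : ‖ω‖ = 1) {w s : ℝ} (hw : 0 < w) (hs : 0 ≤ s)
    (hwidth : ∀ x ∈ E, ∀ y ∈ E, ⟪x - y, ω⟫ ≤ w) :
    ENNReal.ofReal
        (3 ^ (-(finrank ℝ F + s)) * (μ (ball 0 1)).toReal * w ^ (-s) * (μ E).toReal) ≤
      ∫⁻ x in E, ∫⁻ y in Eᶜ, ENNReal.ofReal (dist x y ^ (-(finrank ℝ F + s))) ∂μ ∂μ := by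
  set d : ℝ := (finrank ℝ F : ℝ) with hd
  set a : ℝ := 3 ^ (-(d + s)) * w ^ (-s) with ha
  have hinner : ∀ x ∈ E,
      ENNReal.ofReal a * μ (ball 0 1) ≤ ∫⁻ y in Eᶜ, ENNReal.ofReal (dist x y ^ (-(d + s))) ∂μ := by
    intro x hx
    have hdist : dist x (x + (2 * w) • ω) = 2 * w := by
      rw [dist_self_add_right, norm_smul, hω, mul_one, Real.norm_of_nonneg (by positivity)]
    have hball := ofReal_rpow_neg_mul_measure_ball_le_setLIntegral μ
      (ball_add_two_mul_smul_subset_compl hω fun u hu => hwidth u hu x hx)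
      (by linarith) (by positivity : 0 ≤ d + s)
    rw [hdist, Measure.addHaar_ball_of_pos μ _ hw, ← mul_assoc,
      ← ENNReal.ofReal_mul (by positivity)] at hball
    convert hball using 3
    rw [ha, hd, show 2 * w + w = 3 * w by ring, Real.mul_rpow (by norm_num) hw.le, mul_assoc,
      ← Real.rpow_natCast, ← Real.rpow_add hw]
    ring_nf
  calc ENNReal.ofReal (3 ^ (-(d + s)) * (μ (ball 0 1)).toReal * w ^ (-s) * (μ E).toReal)
      = ENNReal.ofReal a * ENNReal.ofReal (μ (ball 0 1)).toReal *
          ENNReal.ofReal (μ E).toReal := by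
        rw [← ENNReal.ofReal_mul (by positivity), ← ENNReal.ofReal_mul (by positivity), ha]
        congr 1
        ring
    _ ≤ ENNReal.ofReal a * μ (ball 0 1) * μ E := by
        gcongr <;> exact ENNReal.ofReal_toReal_le
    _ = ∫⁻ _ in E, ENNReal.ofReal a * μ (ball 0 1) ∂μ := (setLIntegral_const _ _).symm
    _ ≤ _ := setLIntegral_mono' hE hinner

end AddHaar

theorem fracPer_ge_width_lower_bound (n : ℕ) (hn : 1 ≤ n) (s : ℝ)
    (hs : s ∈ Set.Ioo (0 : ℝ) 1) :
    ∃ c > (0 : ℝ), ∀ E : Set (EuclideanSpace ℝ (Fin n)),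
      Bornology.IsBounded E → Convex ℝ E → (interior E).Nonempty →
      MeasurableSet E →
      ENNReal.ofReal
          (c * (sInf {w : ℝ | ∃ ω : EuclideanSpace ℝ (Fin n), ‖ω‖ = 1 ∧
              w = sSup {a : ℝ | ∃ x ∈ E, ∃ y ∈ E, a = inner ℝ (x - y) ω}}) ^ (-s)
            * (volume E).toReal)
        ≤ ENNReal.ofReal (s * (1 - s)) *
            ∫⁻ x in E, ∫⁻ y in Eᶜ, ENNReal.ofReal (dist x y ^ (-((n : ℝ) + s))) := by
  obtain ⟨hs0, hs1⟩ := hs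
  set κ : ℝ := 3 ^ (-((n : ℝ) + s)) * (volume (ball (0 : EuclideanSpace ℝ (Fin n)) 1)).toReal
  have hκ : 0 < κ := mul_pos (by positivity)
    (ENNReal.toReal_pos (measure_ball_pos volume 0 one_pos).ne' measure_ball_lt_top.ne)
  refine ⟨s * (1 - s) * κ, mul_pos (mul_pos hs0 (by linarith)) hκ, ?_⟩
  intro E hEb _ ⟨z, hz⟩ hEm
  set widths := {w : ℝ | ∃ ω : EuclideanSpace ℝ (Fin n), ‖ω‖ = 1 ∧ w = directionalWidth E ω}
  obtain ⟨r, hr, hball⟩ := Metric.isOpen_iff.mp isOpen_interior z hz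
  have hr_le : ∀ w ∈ widths, r ≤ w := by
    rintro w ⟨ω, hω, rfl⟩
    exact le_directionalWidth_of_ball_subset hEb hr (hball.trans interior_subset) hω
  have hne : widths.Nonempty := ⟨_, EuclideanSpace.single ⟨0, hn⟩ 1, by simp, rfl⟩
  have hbound : ∀ w ∈ widths, ENNReal.ofReal (κ * w ^ (-s) * (volume E).toReal) ≤
      ∫⁻ x in E, ∫⁻ y in Eᶜ, ENNReal.ofReal (dist x y ^ (-((n : ℝ) + s))) := by
    rintro w ⟨ω, hω, rfl⟩
    simpa only [finrank_euclideanSpace_fin] using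
      ofReal_mul_measure_le_lintegral_compl_of_width_le volume hEm hω
        (hr.trans_le (hr_le _ ⟨ω, hω, rfl⟩)) hs0.le
        fun x hx y hy => inner_sub_le_directionalWidth hEb hx hy ω
  have hinf : 0 < sInf widths := hr.trans_le (le_csInf hne hr_le)
  calc ENNReal.ofReal (s * (1 - s) * κ * sInf widths ^ (-s) * (volume E).toReal)
      = ENNReal.ofReal (s * (1 - s)) *
          ENNReal.ofReal (κ * sInf widths ^ (-s) * (volume E).toReal) := by
        rw [← ENNReal.ofReal_mul (by nlinarith)]
        congr 1
        ring
    _ ≤ _ := by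
        gcongr
        refine apply_csInf_le_of_forall_le hne ⟨r, hr_le⟩ ?_ hbound
        exact (ENNReal.continuous_ofReal.continuousAt.comp
          (by fun_prop (disch := exact Or.inl hinf.ne'))).continuousWithinAt
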